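/- arXiv:1808.00335 — 2 statements merged into one kernel-verified Lean document; each statement's English description precedes it below -/
import Mathlib

section
/- Let A be the n×n compartmental matrix of a strongly connected leak-free directed graph G (n ≥ 2), and let i be a vertex. Then the coefficient of λ^{n-2} in det((λI - A)_{ii}) equals ∑_{(k,l) ∈ E, k ≠ i} a_{lk}, the sum of edge parameters of all edges of G that do not originate at vertex i. In particular, since G is strongly connected and has at least one edge out of i, this is a strict subsum of the sum of all edge parameters. -/
open MvPolynomial

/-- Let A be the (n+2)×(n+2) compartmental matrix of a strongly connected
leak-free directed graph G, over the polynomial ring in the edge parameters, and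
let i be a vertex.  Then the coefficient of λ^{(n+2)-2} in det((λI - A)_{ii})
(the minor deleting row i and column i) equals the sum of the edge parameters of
all edges of G that do not originate at i; moreover this is a strict subsum of
the sum of all edge parameters, i.e. the edges not originating at i form a
proper subset of E. -/
theorem coeff_charmatrix_minor_ii
    (n : ℕ)
    (E : Finset (Fin (n + 2) × Fin (n + 2)))
    (hstrong : ∀ u v : Fin (n + 2),
      Relation.ReflTransGen (fun a b => (a, b) ∈ E) u v)
    (A : Matrix (Fin (n + 2)) (Fin (n + 2)) (MvPolynomial (Fin (n + 2) × Fin (n + 2)) ℚ))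
    (hA : ∀ k l, A k l =
      if k = l then -∑ m ∈ Finset.univ.filter (fun m => (k, m) ∈ E), X (k, m)
      else if (l, k) ∈ E then X (l, k) else 0)
    (i : Fin (n + 2)) :
    (((Matrix.charmatrix A).submatrix i.succAbove i.succAbove).det).coeff n
        = ∑ e ∈ E.filter (fun e => e.1 ≠ i), X e
    ∧ E.filter (fun e => e.1 ≠ i) ⊂ E := by
  have hinj : Function.Injective i.succAbove := Fin.succAbove_right_injective
  constructor
  · have h1 : (Matrix.charmatrix A).submatrix i.succAbove i.succAbove
        = Matrix.charmatrix (A.submatrix i.succAbove i.succAbove) := by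
      ext k l
      by_cases h : k = l
      · subst h; simp [Matrix.charmatrix_apply_eq]
      · rw [Matrix.submatrix_apply, Matrix.charmatrix_apply_ne _ _ _ (fun hh => h (hinj hh)),
          Matrix.charmatrix_apply_ne _ _ _ h, Matrix.submatrix_apply]
    rw [h1]
    have h2 := Matrix.trace_eq_neg_charpoly_coeff (A.submatrix i.succAbove i.succAbove)
    have hcard : Fintype.card (Fin (n + 1)) - 1 = n := by simp
    rw [hcard] at h2
    have h3 : ((A.submatrix i.succAbove i.succAbove).charpoly).coeff n
        = -Matrix.trace (A.submatrix i.succAbove i.succAbove) := by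
      rw [h2]; ring
    rw [Matrix.charpoly] at h3
    rw [h3]
    have htr : Matrix.trace (A.submatrix i.succAbove i.succAbove)
        = ∑ j : Fin (n + 1),
            (-∑ m ∈ Finset.univ.filter (fun m => (i.succAbove j, m) ∈ E),
              X (i.succAbove j, m)) := by
      rw [Matrix.trace]
      refine Finset.sum_congr rfl fun j _ => ?_
      rw [Matrix.diag_apply, Matrix.submatrix_apply, hA, if_pos rfl]
    rw [htr, ← Finset.sum_neg_distrib]
    simp only [neg_neg]
    -- now: ∑ j, ∑ m ∈ filter, X (succAbove j, m) = ∑ e ∈ E.filter (fun e => e.1 ≠ i), X e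
    have hsplit : ∑ e ∈ E.filter (fun e => e.1 ≠ i), (X e :
          MvPolynomial (Fin (n + 2) × Fin (n + 2)) ℚ)
        = ∑ k ∈ Finset.univ.filter (fun k => k ≠ i),
            ∑ m ∈ Finset.univ.filter (fun m => (k, m) ∈ E), X (k, m) := by
      refine Finset.sum_finset_product _ _ _ fun p => ?_
      simp [and_comm]
    rw [hsplit]
    have hbij : ∑ j : Fin (n + 1),
          ∑ m ∈ Finset.univ.filter (fun m => (i.succAbove j, m) ∈ E),
            (X (i.succAbove j, m) : MvPolynomial (Fin (n + 2) × Fin (n + 2)) ℚ)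
        = ∑ k ∈ Finset.univ.filter (fun k => k ≠ i),
            ∑ m ∈ Finset.univ.filter (fun m => (k, m) ∈ E), X (k, m) := by
      set g : Fin (n + 2) → MvPolynomial (Fin (n + 2) × Fin (n + 2)) ℚ :=
        fun k => ∑ m ∈ Finset.univ.filter (fun m => (k, m) ∈ E), X (k, m) with hg
      have h4 := Fin.sum_univ_succAbove g i
      have h5 : (Finset.univ.filter (fun k => k ≠ i)) = Finset.univ.erase i :=
        Finset.filter_ne' _ _
      rw [h5]
      have h6 : g i + ∑ k ∈ Finset.univ.erase i, g k = ∑ k, g k :=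
        Finset.add_sum_erase _ g (Finset.mem_univ i)
      have := h4.symm.trans h6.symm
      exact add_left_cancel this
    rw [hbij]
  · refine Finset.ssubset_iff_of_subset (Finset.filter_subset _ _) |>.mpr ?_
    have hne : (i + 1 : Fin (n + 2)) ≠ i := by
      intro h
      have := congrArg (fun x => x - i) h
      simp at this
    obtain h | ⟨c, hc, -⟩ := (hstrong i (i + 1)).cases_head
    · exact absurd h.symm hne
    · exact ⟨(i, c), hc, by simp⟩
end

section
/- Let G be a directed graph, let H̄ be the input-output-reachable subgraph to a vertex i (the induced subgraph on i, all inputs j with a directed path to i, and all vertices on such paths), let U be the union of strong components not in H̄ having a directed path into H̄, and let D be the union of all remaining strong components. Then the vertex sets of U, H̄, and D partition V(G), and there are no edges from H̄ to U, from D to H̄, or from D to U. -/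
/-- Let G be a directed graph with edge relation E, In a set of input vertices,
and i a vertex reachable from some input.  Let H̄ be the input-output-reachable
subgraph to i (i together with all vertices lying on a directed path from some
input to i), let U be the union of strong components not in H̄ having a
directed path into H̄, and let D consist of all remaining vertices.  Then U, H̄,
D partition the vertex set, and there are no edges from H̄ to U, from D to H̄,
or from D to U. -/
theorem upstream_downstream_partition
    (V : Type*) (E : V → V → Prop) (In : Set V) (i : V)
    (hIn : ∃ j ∈ In, Relation.ReflTransGen E j i)
    (Hbar U D : Set V)
    (hHbar : Hbar = {i} ∪ {v | ∃ j ∈ In,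
      Relation.ReflTransGen E j v ∧ Relation.ReflTransGen E v i})
    (hU : U = {v | v ∉ Hbar ∧ ∃ h ∈ Hbar, Relation.ReflTransGen E v h})
    (hD : D = {v | v ∉ Hbar ∧ v ∉ U}) :
    (∀ v : V, v ∈ U ∨ v ∈ Hbar ∨ v ∈ D) ∧
    Disjoint U Hbar ∧ Disjoint U D ∧ Disjoint Hbar D ∧
    (∀ u ∈ Hbar, ∀ w ∈ U, ¬ E u w) ∧
    (∀ u ∈ D, ∀ w ∈ Hbar, ¬ E u w) ∧
    (∀ u ∈ D, ∀ w ∈ U, ¬ E u w) := by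
  -- every vertex of Hbar has a path to i
  have hto : ∀ h ∈ Hbar, Relation.ReflTransGen E h i := by
    intro h hh
    rw [hHbar] at hh
    rcases hh with hh | ⟨j, _, _, hji⟩
    · cases hh; exact Relation.ReflTransGen.refl
    · exact hji
  -- every vertex of Hbar is reachable from some input
  have hfrom : ∀ h ∈ Hbar, ∃ j ∈ In, Relation.ReflTransGen E j h := by
    intro h hh
    rw [hHbar] at hh
    rcases hh with hh | ⟨j, hj, hjh, _⟩
    · cases hh; exact hIn
    · exact ⟨j, hj, hjh⟩
  -- no edges from Hbar to U
  have hHU : ∀ u ∈ Hbar, ∀ w ∈ U, ¬ E u w := by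
    intro u hu w hw e
    rw [hU] at hw
    obtain ⟨hwn, h, hh, hwh⟩ := hw
    obtain ⟨j, hj, hju⟩ := hfrom u hu
    exact hwn (by
      rw [hHbar]
      exact Or.inr ⟨j, hj, hju.tail e, hwh.trans (hto h hh)⟩)
  -- no edges from D to Hbar
  have hDH : ∀ u ∈ D, ∀ w ∈ Hbar, ¬ E u w := by
    intro u hu w hw e
    rw [hD] at hu
    exact hu.2 (by rw [hU]; exact ⟨hu.1, w, hw, Relation.ReflTransGen.single e⟩)
  -- no edges from D to U
  have hDU : ∀ u ∈ D, ∀ w ∈ U, ¬ E u w := by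
    intro u hu w hw e
    rw [hD] at hu
    rw [hU] at hw
    obtain ⟨_, h, hh, hwh⟩ := hw
    exact hu.2 (by
      rw [hU]
      exact ⟨hu.1, h, hh, (Relation.ReflTransGen.single e).trans hwh⟩)
  refine ⟨?_, ?_, ?_, ?_, hHU, hDH, hDU⟩
  · intro v
    by_cases h1 : v ∈ Hbar
    · exact Or.inr (Or.inl h1)
    by_cases h2 : v ∈ U
    · exact Or.inl h2
    · exact Or.inr (Or.inr (by rw [hD]; exact ⟨h1, h2⟩))
  · rw [Set.disjoint_left]
    intro v hv hv'
    rw [hU] at hv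
    exact hv.1 hv'
  · rw [Set.disjoint_left]
    intro v hv hv'
    rw [hD] at hv'
    exact hv'.2 hv
  · rw [Set.disjoint_left]
    intro v hv hv'
    rw [hD] at hv'
    exact hv'.1 hv
end
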